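/- arXiv:1210.0947 — 5 statements merged into one kernel-verified Lean document; each statement's English description precedes it below -/
import Mathlib

section
/- Consider the system of N(N+1)/2 linear inequalities Σ_{j=k}^{l} x_j ≤ b_{k,l} for 1 ≤ k ≤ l ≤ N, in real variables x_1,…,x_N, subject to x_1 + ⋯ + x_N = 0. This system has a solution if and only if Σₙ b_{kₙ,lₙ} ≥ 0 for every simple covering P = {[kₙ,lₙ]} of [1,N], i.e. every finite family of intervals of integers [kₙ,lₙ] with 1 ≤ kₙ ≤ lₙ ≤ N such that each integer in {1,…,N} belongs to exactly one interval (so the intervals partition {1,…,N} into consecutive blocks). -/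
noncomputable def korS (b : ℕ → ℕ → ℝ) : ℕ → ℝ
  | 0 => 0
  | (l+1) => (Finset.Icc 1 (l+1)).attach.inf'
      (Finset.attach_nonempty_iff.mpr ⟨1, by simp⟩)
      (fun k => korS b (k.1 - 1) + b k.1 (l+1))
termination_by l => l
decreasing_by
  have hk := (Finset.mem_Icc.mp k.2).2
  omega

lemma korS_le (b : ℕ → ℕ → ℝ) (k l : ℕ) (h1 : 1 ≤ k) (h2 : k ≤ l) :
    korS b l ≤ korS b (k-1) + b k l := by
  obtain ⟨l', rfl⟩ : ∃ l', l = l' + 1 := ⟨l - 1, by omega⟩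
  rw [korS]
  exact Finset.inf'_le _ (Finset.mem_attach _ ⟨k, Finset.mem_Icc.mpr ⟨h1, h2⟩⟩)

lemma korS_eq (b : ℕ → ℕ → ℝ) (l : ℕ) (hl : 1 ≤ l) :
    ∃ (p : ℕ) (c : ℕ → ℕ), 0 < p ∧ c 0 = 1 ∧ c p = l + 1 ∧ (∀ i < p, c i < c (i+1)) ∧
      korS b l = ∑ i ∈ Finset.range p, b (c i) (c (i+1) - 1) := by
  induction l using Nat.strong_induction_on with
  | _ l ih =>
    obtain ⟨l', rfl⟩ : ∃ l', l = l' + 1 := ⟨l - 1, by omega⟩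
    obtain ⟨k, -, hkeq⟩ := Finset.exists_mem_eq_inf'
      (Finset.attach_nonempty_iff.mpr ⟨1, by simp⟩ :
        ((Finset.Icc 1 (l'+1)).attach).Nonempty)
      (fun k : {x // x ∈ Finset.Icc 1 (l'+1)} => korS b (k.1 - 1) + b k.1 (l'+1))
    have hval : korS b (l'+1) = korS b (k.1 - 1) + b k.1 (l'+1) := by
      rw [korS]; exact hkeq
    have hk1 : 1 ≤ k.1 := (Finset.mem_Icc.mp k.2).1
    have hk2 : k.1 ≤ l' + 1 := (Finset.mem_Icc.mp k.2).2
    by_cases hone : k.1 = 1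
    · refine ⟨1, fun i => if i = 0 then 1 else l' + 2, one_pos, by simp, by simp, ?_, ?_⟩
      · intro i hi
        interval_cases i
        simp
      · simp only [Finset.sum_range_one]
        norm_num
        rw [hval, hone]
        simp [korS]
    · have hk1' : 1 ≤ k.1 - 1 := by omega
      obtain ⟨p, c, hp, hc0, hcp, hmono, hsum⟩ := ih (k.1 - 1) (by omega) hk1'
      refine ⟨p + 1, fun i => if i ≤ p then c i else l' + 2, by omega, ?_, ?_, ?_, ?_⟩
      · simp [hc0]
      · simp
      · intro i hi
        beta_reduce
        rcases Nat.lt_or_ge i p with h | h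
        · rw [if_pos (by omega), if_pos (by omega)]
          exact hmono i h
        · have : i = p := by omega
          subst this
          rw [if_pos le_rfl, if_neg (by omega), hcp]
          omega
      · rw [Finset.sum_range_succ, hval, hsum]
        congr 1
        · apply Finset.sum_congr rfl
          intro i hi
          have hi' := Finset.mem_range.mp hi
          beta_reduce
          rw [if_pos (by omega), if_pos (by omega)]
        · beta_reduce
          rw [if_pos le_rfl, if_neg (by omega), hcp]
          congr 1
          omega

lemma tele (f : ℕ → ℝ) (k : ℕ) (l : ℕ) (hl : k ≤ l) :
    ∑ j ∈ Finset.Icc k l, (f j - f (j-1)) = f l - f (k-1) := by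
  induction l, hl using Nat.le_induction with
  | base => simp
  | succ n hn ih =>
    rw [Finset.sum_Icc_succ_top (by omega), ih]
    simp only [Nat.add_sub_cancel]
    ring

/-- Korenblum's linear programming lemma: the system `Σ_{j=k}^{l} x_j ≤ b_{k,l}`
(`1 ≤ k ≤ l ≤ N`) with constraint `x_1 + ⋯ + x_N = 0` has a solution iff
`Σₙ b_{kₙ,lₙ} ≥ 0` for every simple covering of `[1,N]`, i.e. every partition of
`{1,…,N}` into consecutive discrete blocks, encoded by cut points
`1 = c 0 < c 1 < ⋯ < c p = N + 1` with blocks `[c i, c (i+1) - 1]`. -/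
theorem stmt1 (N : ℕ) (hN : 1 ≤ N) (b : ℕ → ℕ → ℝ) :
    (∃ x : ℕ → ℝ, (∑ j ∈ Finset.Icc 1 N, x j) = 0 ∧
      ∀ k l : ℕ, 1 ≤ k → k ≤ l → l ≤ N → (∑ j ∈ Finset.Icc k l, x j) ≤ b k l) ↔
    (∀ (p : ℕ) (c : ℕ → ℕ), 0 < p → c 0 = 1 → c p = N + 1 →
      (∀ i < p, c i < c (i + 1)) →
      0 ≤ ∑ i ∈ Finset.range p, b (c i) (c (i + 1) - 1)) := by
  constructor
  · rintro ⟨x, hsum, hcon⟩ p c hp hc0 hcp hmono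
    have hmono' : ∀ i j, i ≤ j → j ≤ p → c i ≤ c j := by
      intro i j hij hjp
      induction j with
      | zero => simpa [Nat.le_zero.mp hij]
      | succ n ihn =>
        rcases Nat.lt_or_ge i (n+1) with h | h
        · exact le_trans (ihn (by omega) (by omega)) (le_of_lt (hmono n (by omega)))
        · have : i = n + 1 := by omega
          simp [this]
    have hc1 : ∀ i ≤ p, 1 ≤ c i := by
      intro i hi
      have := hmono' 0 i (Nat.zero_le _) hi
      omega
    -- merge blocks
    have hmerge : ∀ q ≤ p, ∑ i ∈ Finset.range q, ∑ j ∈ Finset.Icc (c i) (c (i+1) - 1), x j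
        = ∑ j ∈ Finset.Ico (c 0) (c q), x j := by
      intro q hq
      induction q with
      | zero => simp
      | succ n ihn =>
        rw [Finset.sum_range_succ, ihn (by omega)]
        have h1 : Finset.Icc (c n) (c (n+1) - 1) = Finset.Ico (c n) (c (n+1)) := by
          have := hc1 (n+1) hq
          rw [← Finset.Ico_add_one_right_eq_Icc]
          congr 1
          omega
        rw [h1, Finset.sum_Ico_consecutive _ (hmono' 0 n (Nat.zero_le _) (by omega))
          (le_of_lt (hmono n (by omega)))]
    have key : ∑ i ∈ Finset.range p, ∑ j ∈ Finset.Icc (c i) (c (i+1) - 1), x j = 0 := by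
      rw [hmerge p le_rfl, hc0, hcp]
      rw [Finset.Ico_add_one_right_eq_Icc]
      exact hsum
    calc (0:ℝ) = ∑ i ∈ Finset.range p, ∑ j ∈ Finset.Icc (c i) (c (i+1) - 1), x j := key.symm
      _ ≤ ∑ i ∈ Finset.range p, b (c i) (c (i+1) - 1) := by
          apply Finset.sum_le_sum
          intro i hi
          have hi' := Finset.mem_range.mp hi
          have h1 : 1 ≤ c i := hc1 i (by omega)
          have h2 : c i ≤ c (i+1) - 1 := by have := hmono i hi'; omega
          have h3 : c (i+1) - 1 ≤ N := by
            have := hmono' (i+1) p (by omega) le_rfl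
            omega
          exact hcon _ _ h1 h2 h3
  · intro hcov
    -- key positivity: korS b N ≥ 0
    obtain ⟨p, c, hp, hc0, hcp, hmono, hsum⟩ := korS_eq b N hN
    have hSN : 0 ≤ korS b N := hsum ▸ hcov p c hp hc0 hcp hmono
    set T : ℕ → ℝ := fun j => if j = N then 0 else korS b j with hT
    have hT0 : T 0 = 0 := by
      simp only [hT]
      rw [if_neg (by omega)]
      simp [korS]
    have hTle : ∀ j, T j ≤ korS b j := by
      intro j
      by_cases h : j = N
      · simp [hT, h, hSN]
      · simp [hT, h]
    have hTeq : ∀ j < N, T j = korS b j := by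
      intro j hj
      simp [hT, Nat.ne_of_lt hj]
    refine ⟨fun j => T j - T (j-1), ?_, ?_⟩
    · rw [tele T 1 N hN]
      have h1 : T N = 0 := by simp [hT]
      have h2 : (1:ℕ) - 1 = 0 := rfl
      rw [h2, h1, hT0, sub_zero]
    · intro k l h1 h2 h3
      rw [tele T k l h2]
      have hk1 : T (k-1) = korS b (k-1) := hTeq _ (by omega)
      have := korS_le b k l h1 h2
      have := hTle l
      rw [hk1]
      linarith
end

section
/- Let μ be a Λ-bounded premeasure and F a Λ-Carleson set with complementary arcs {Iₙ} (|I₁| ≥ |I₂| ≥ ⋯). Then the Λ-singular part μ_s(F) := −Σₙ μ(Iₙ) is well-defined (the series converges) and μ_s(F) ≤ 0. -/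
open MeasureTheory Filter Metric Set
open scoped Topology ENNReal

noncomputable section

instance : Fact ((0:ℝ) < 1) := ⟨one_pos⟩

/-- The circle of circumference 1. -/
abbrev Circle1 := AddCircle (1 : ℝ)

/-- Arcs (possibly half-open, possibly empty) of the circle. -/
def IsArc (S : Set Circle1) : Prop :=
  ∃ a l : ℝ, 0 ≤ l ∧ l ≤ 1 ∧ S = (fun x : ℝ => (x : Circle1)) '' Set.Ico a (a + l)

/-- Normalized length of a subset of the circle. -/
def arcLen (S : Set Circle1) : ℝ := (volume S).toReal

/-- A premeasure on the circle: finitely additive on arcs, total mass zero,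
continuous on nested sequences of arcs with empty intersection. -/
structure Premeasure where
  m : Set Circle1 → ℝ
  empty : m ∅ = 0
  total : m Set.univ = 0
  union : ∀ S T : Set Circle1, Disjoint S T → IsArc T → m (S ∪ T) = m S + m T
  cont : ∀ I : ℕ → Set Circle1, (∀ n, IsArc (I n)) → (∀ n, I (n + 1) ⊆ I n) →
    (⋂ n, I n) = ∅ → Tendsto (fun n => m (I n)) atTop (𝓝 0)

/-- `μ(I) ≤ C |I| Λ(|I|)` for every arc `I`. -/
def LambdaBounded (Λ : ℝ → ℝ) (μ : Premeasure) (C : ℝ) : Prop :=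
  ∀ S : Set Circle1, IsArc S → μ.m S ≤ C * arcLen S * Λ (arcLen S)

/-- Majorant hypotheses on `Λ`. -/
def Majorant (Λ : ℝ → ℝ) : Prop :=
  (∀ t ∈ Set.Ioc (0:ℝ) 1, 0 < Λ t) ∧ AntitoneOn Λ (Set.Ioc 0 1) ∧
  MonotoneOn (fun t => t * Λ t) (Set.Ioc 0 1) ∧
  Tendsto (fun t => t * Λ t) (𝓝[>] 0) (𝓝 0) ∧
  Tendsto Λ (𝓝[>] 0) atTop

/-! Removing finitely many of the arcs `Iₙ` (`n ∈ s`) from the circle leaves finitely many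
disjoint arcs `J`; since `F` is null, each `J` is covered up to measure zero by the remaining
arcs `Iₘ ⊆ J`. As `Λ` is non-increasing, `|J| Λ(|J|) ≤ Σ_{Iₘ ⊆ J} |Iₘ| Λ(|Iₘ|)`, so
`Λ`-boundedness (with `C ≥ 0`) and `μ(𝕋) = 0` give
`-Σ_{n ∈ s} μ(Iₙ) = μ(𝕋 \ ⋃_{n ∈ s} Iₙ) ≤ C · Σ_{m ∉ s} |Iₘ| Λ(|Iₘ|)`.
Since also `μ(Iₙ) ≤ C |Iₙ| Λ(|Iₙ|)`, the nonnegative series `Σ (C |Iₙ| Λ(|Iₙ|) - μ(Iₙ))` has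
bounded partial sums, so `Σ μ(Iₙ)` converges, and letting `s` exhaust `ℕ` in the lower bound
gives `Σ μ(Iₙ) ≥ 0`. -/

open Function

local notation "π" => ((↑) : ℝ → Circle1)

theorem summable_and_tsum_nonneg_of_le_of_sum_sub_tsum_le {ι : Type*} {a b : ι → ℝ}
    (hb : Summable b) (hab : ∀ i, a i ≤ b i)
    (hlow : ∀ s : Finset ι, ∑ i ∈ s, b i - ∑' i, b i ≤ ∑ i ∈ s, a i) :
    Summable a ∧ 0 ≤ ∑' i, a i := by
  have hba : Summable (b - a) := summable_of_sum_le (fun i => sub_nonneg.2 (hab i)) fun s => by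
    simp only [Pi.sub_apply, Finset.sum_sub_distrib]
    linarith [hlow s]
  have ha : Summable a := by simpa using hb.sub hba
  refine ⟨ha, le_of_tendsto_of_tendsto' ?_ ha.hasSum hlow⟩
  simpa using hb.hasSum.sub_const (∑' i, b i)

theorem arcLen_nonneg (S : Set Circle1) : 0 ≤ arcLen S := ENNReal.toReal_nonneg

theorem arcLen_le_one (S : Set Circle1) : arcLen S ≤ 1 :=
  ENNReal.toReal_le_of_le_ofReal zero_le_one
    ((measure_mono (subset_univ S)).trans_eq (AddCircle.measure_univ 1))

theorem arcLen_mono {S T : Set Circle1} (h : S ⊆ T) : arcLen S ≤ arcLen T :=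
  ENNReal.toReal_mono (measure_ne_top _ _) (measure_mono h)

theorem arcLen_le_tsum_of_subset_union {ι : Type*} [Countable ι] {F J : Set Circle1}
    (hF0 : volume F = 0) {T : Set ι} {I : ι → Set Circle1}
    (hlen : Summable fun i => arcLen (I i)) (hJ : J ⊆ F ∪ ⋃ i ∈ T, I i) :
    arcLen J ≤ ∑' i, T.indicator (fun i => arcLen (I i)) i := by
  have hvol : volume J ≤ ∑' i : T, volume (I i) :=
    calc volume J ≤ volume F + volume (⋃ i ∈ T, I i) :=
          (measure_mono hJ).trans (measure_union_le _ _)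
      _ = volume (⋃ i ∈ T, I i) := by rw [hF0, zero_add]
      _ ≤ ∑' i : T, volume (I i) := measure_biUnion_le _ T.to_countable _
  rw [← tsum_subtype]
  refine ENNReal.toReal_le_of_le_ofReal (tsum_nonneg fun _ => arcLen_nonneg _) (hvol.trans_eq ?_)
  rw [ENNReal.ofReal_tsum_of_nonneg (f := fun i : T => arcLen (I i)) (fun _ => arcLen_nonneg _)
    (hlen.subtype T)]
  exact tsum_congr fun i => (ENNReal.ofReal_toReal (measure_ne_top _ _)).symm

namespace Majorant

variable {Λ : ℝ → ℝ}

theorem mul_apply_nonneg (hΛ : Majorant Λ) {t : ℝ} (h0 : 0 ≤ t) (h1 : t ≤ 1) :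
    0 ≤ t * Λ t := by
  rcases h0.eq_or_lt with rfl | h
  · simp
  · exact (mul_pos h (hΛ.1 t ⟨h, h1⟩)).le

theorem mul_apply_le_mul_apply (hΛ : Majorant Λ) {s t : ℝ} (hs : 0 ≤ s) (hst : s ≤ t)
    (ht : t ≤ 1) : s * Λ t ≤ s * Λ s := by
  rcases hs.eq_or_lt with rfl | hs
  · simp
  · exact mul_le_mul_of_nonneg_left
      (hΛ.2.1 ⟨hs, hst.trans ht⟩ ⟨hs.trans_le hst, ht⟩ hst) hs.le

/-- `t Λ(1) ≤ t Λ(t)` on `[0, 1]`, so finite entropy forces finite total length. -/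
theorem summable_of_summable_mul_apply (hΛ : Majorant Λ) {ι : Type*} {x : ι → ℝ}
    (h0 : ∀ i, 0 ≤ x i) (h1 : ∀ i, x i ≤ 1) (h : Summable fun i => x i * Λ (x i)) :
    Summable x :=
  (h.div_const (Λ 1)).of_nonneg_of_le h0 fun i =>
    (le_div_iff₀ (hΛ.1 1 ⟨one_pos, le_rfl⟩)).2 (hΛ.mul_apply_le_mul_apply (h0 i) (h1 i) le_rfl)

theorem entropy_le_tsum_of_subset_union (hΛ : Majorant Λ) {ι : Type*} [Countable ι]
    {F J : Set Circle1} (hF0 : volume F = 0) {T : Set ι} {I : ι → Set Circle1}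
    (hent : Summable fun i => arcLen (I i) * Λ (arcLen (I i))) (hIJ : ∀ i ∈ T, I i ⊆ J)
    (hJ : J ⊆ F ∪ ⋃ i ∈ T, I i) :
    arcLen J * Λ (arcLen J) ≤ ∑' i, T.indicator (fun i => arcLen (I i) * Λ (arcLen (I i))) i := by
  have hlen := hΛ.summable_of_summable_mul_apply (fun i => arcLen_nonneg (I i))
    (fun i => arcLen_le_one _) hent
  rcases (arcLen_nonneg J).eq_or_lt with h0 | hpos
  · rw [← h0, zero_mul]
    exact tsum_nonneg fun i => indicator_nonneg
      (fun i _ => hΛ.mul_apply_nonneg (arcLen_nonneg _) (arcLen_le_one _)) i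
  calc arcLen J * Λ (arcLen J)
      ≤ (∑' i, T.indicator (fun i => arcLen (I i)) i) * Λ (arcLen J) :=
        mul_le_mul_of_nonneg_right (arcLen_le_tsum_of_subset_union hF0 hlen hJ)
          (hΛ.1 _ ⟨hpos, arcLen_le_one J⟩).le
    _ = ∑' i, T.indicator (fun i => arcLen (I i) * Λ (arcLen J)) i := by
        rw [← tsum_mul_right]
        exact tsum_congr fun i => (indicator_mul_left T _ fun _ => Λ (arcLen J)).symm
    _ ≤ _ := by
        refine (((hlen.indicator T).mul_right _).congr fun i =>
          (indicator_mul_left T _ fun _ => Λ (arcLen J)).symm)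
          |>.tsum_le_tsum (fun i => ?_) (hent.indicator T)
        by_cases hi : i ∈ T
        · simp only [indicator_of_mem hi]
          exact hΛ.mul_apply_le_mul_apply (arcLen_nonneg _) (arcLen_mono (hIJ i hi))
            (arcLen_le_one J)
        · simp [hi]

end Majorant

theorem LambdaBounded.mono {Λ : ℝ → ℝ} (hΛ : Majorant Λ) {μ : Premeasure} {C C' : ℝ}
    (hμ : LambdaBounded Λ μ C) (hCC' : C ≤ C') : LambdaBounded Λ μ C' := fun S hS =>
  (hμ S hS).trans <| by
    rw [mul_assoc, mul_assoc]
    exact mul_le_mul_of_nonneg_right hCC'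
      (hΛ.mul_apply_nonneg (arcLen_nonneg S) (arcLen_le_one S))

theorem Premeasure.m_union_biUnion (μ : Premeasure) {ι : Type*} {A : ι → Set Circle1}
    {t : Finset ι} (harc : ∀ i ∈ t, IsArc (A i)) (hdisj : (t : Set ι).PairwiseDisjoint A)
    {S : Set Circle1} (hS : ∀ i ∈ t, Disjoint S (A i)) :
    μ.m (S ∪ ⋃ i ∈ t, A i) = μ.m S + ∑ i ∈ t, μ.m (A i) := by
  classical
  induction t using Finset.induction_on with
  | empty => simp
  | @insert a t ha ih =>
    rw [Finset.coe_insert] at hdisj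
    have hdisj' : Disjoint (S ∪ ⋃ i ∈ t, A i) (A a) :=
      disjoint_union_left.2 ⟨hS a (t.mem_insert_self a), disjoint_iUnion₂_left.2 fun i hi =>
        hdisj (mem_insert_of_mem _ hi) (mem_insert a _) (ne_of_mem_of_not_mem hi ha)⟩
    have hunion : S ∪ ⋃ i ∈ insert a t, A i = (S ∪ ⋃ i ∈ t, A i) ∪ A a := by
      rw [Finset.set_biUnion_insert]; ac_rfl
    rw [hunion, μ.union _ _ hdisj' (harc a (t.mem_insert_self a)),
      ih (fun i hi => harc i (Finset.mem_insert_of_mem hi))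
        (hdisj.subset (subset_insert _ _)) (fun i hi => hS i (Finset.mem_insert_of_mem hi)),
      Finset.sum_insert ha]
    ring

theorem Premeasure.m_compl_biUnion_add_sum (μ : Premeasure) {ι : Type*} {I : ι → Set Circle1}
    (hI : ∀ n, IsArc (I n)) (hdisj : Pairwise (Disjoint on I)) (s : Finset ι) :
    μ.m (⋃ n ∈ s, I n)ᶜ + ∑ n ∈ s, μ.m (I n) = 0 := by
  have h := μ.m_union_biUnion (S := (⋃ n ∈ s, I n)ᶜ) (fun n _ => hI n) (hdisj.set_pairwise _)
    (fun n hn => disjoint_compl_left.mono_right (Finset.subset_set_biUnion_of_mem hn))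
  rwa [compl_union_self, μ.total, eq_comm] at h

theorem isArc_empty : IsArc ∅ :=
  ⟨0, 0, le_rfl, zero_le_one, by simp⟩

theorem isArc_univ : IsArc univ :=
  ⟨0, 1, zero_le_one, le_rfl, (AddCircle.coe_image_Ico_eq 1 0).symm⟩

theorem image_coe_Ico_eq_of_coe_eq {c c' : ℝ} (h : π c = π c') (p : ℝ) :
    π '' Ico c (c + p) = π '' Ico c' (c' + p) := by
  have hshift : π ∘ (· + (c' - c)) = π := by
    funext x
    simp [h]
  have hIco : Ico (c + (c' - c)) (c + p + (c' - c)) = Ico c' (c' + p) := by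
    congr 1 <;> ring
  rw [← hIco, ← image_add_const_Ico, ← image_comp, hshift]

/-- Reduce `c` modulo `1` into `(a + l - 1, a + l]`: missing `π (a + l)` forces the lifted
interval to end by `a + l`, and injectivity of `π` on that window puts its start in `[a, a + l)`. -/
theorem exists_lift_of_image_coe_Ico_subset {a l c p : ℝ} (hl : l ≤ 1) (hp : 0 < p)
    (hsub : π '' Ico c (c + p) ⊆ π '' Ico a (a + l)) (hcut : π (a + l) ∉ π '' Ico c (c + p)) :
    ∃ c', π '' Ico c (c + p) = π '' Ico c' (c' + p) ∧ a ≤ c' ∧ c' + p ≤ a + l := by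
  obtain ⟨c', ⟨hc'₁, hc'₂⟩, hcc'⟩ : π c ∈ π '' Ioc (a + l - 1) (a + l - 1 + 1) := by
    rw [AddCircle.coe_image_Ioc_eq]; trivial
  rw [image_coe_Ico_eq_of_coe_eq hcc'.symm] at hsub hcut ⊢
  have hend : c' + p ≤ a + l := by
    by_contra! h
    exact hcut ⟨a + l, ⟨by linarith, h⟩, rfl⟩
  obtain ⟨x, hx, hxc'⟩ := hsub ⟨c', ⟨le_rfl, by linarith⟩, rfl⟩
  have hxeq : x = c' := (AddCircle.coe_eq_coe_iff_of_mem_Ico (a := a + l - 1)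
    ⟨by linarith [hx.1], by linarith [hx.2]⟩ ⟨hc'₁.le, by linarith⟩).1 hxc'
  exact ⟨c', rfl, hxeq ▸ hx.1, hend⟩

theorem exists_arc_split_of_le {a b l m : ℝ} (hab : a ≤ b) (hbl : b + m ≤ a + l) (hl : l ≤ 1)
    (hm : 0 < m) (hcut : π (a + l) ∉ π '' Ico a (a + l) \ π '' Ico b (b + m)) :
    ∃ A₁ A₂, IsArc A₁ ∧ IsArc A₂ ∧ Disjoint A₁ A₂ ∧
      A₁ ∪ A₂ = π '' Ico a (a + l) \ π '' Ico b (b + m) ∧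
      ∀ A, IsArc A → A ⊆ π '' Ico a (a + l) \ π '' Ico b (b + m) → A ⊆ A₁ ∨ A ⊆ A₂ := by
  have hinj : InjOn π (Ico a (a + l)) := fun x hx y hy h =>
    (AddCircle.coe_eq_coe_iff_of_mem_Ico ⟨hx.1, by linarith [hx.2]⟩
      ⟨hy.1, by linarith [hy.2]⟩).1 h
  refine ⟨π '' Ico a b, π '' Ico (b + m) (a + l),
    ⟨a, b - a, by linarith, by linarith, by rw [add_sub_cancel]⟩,
    ⟨b + m, a + l - (b + m), by linarith, by linarith, by rw [add_sub_cancel]⟩, ?_, ?_, ?_⟩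
  · exact (Ico_disjoint_Ico.2 (min_le_of_left_le (le_max_of_le_right (by linarith)))).image
      hinj (Ico_subset_Ico_right (by linarith)) (Ico_subset_Ico_left (by linarith))
  · have hdiff : Ico a (a + l) \ Ico b (b + m) = Ico a b ∪ Ico (b + m) (a + l) := by
      ext x
      simp only [Set.mem_sdiff, mem_Ico, mem_union]
      grind
    rw [← image_union, ← hdiff, hinj.image_sdiff_subset (Ico_subset_Ico hab hbl)]
  · rintro _ ⟨c, p, hp0, -, rfl⟩ hA
    rcases hp0.eq_or_lt with rfl | hp
    · simp
    obtain ⟨c', hcc', hac', hc'l⟩ := exists_lift_of_image_coe_Ico_subset hl hp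
      (hA.trans sdiff_subset) fun h => hcut (hA h)
    rw [hcc'] at hA ⊢
    rcases le_or_gt (c' + p) b with h | h
    · exact Or.inl (image_mono (Ico_subset_Ico hac' h))
    rcases le_or_gt (b + m) c' with h' | h'
    · exact Or.inr (image_mono (Ico_subset_Ico h' hc'l))
    exact ((hA ⟨max c' b, ⟨le_max_left _ _, max_lt (by linarith) h⟩, rfl⟩).2
      ⟨max c' b, ⟨le_max_right _ _, max_lt h' (by linarith)⟩, rfl⟩).elim

theorem IsArc.exists_split {J B : Set Circle1} (hJ : IsArc J) (hB : IsArc B) (hBJ : B ⊆ J) :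
    ∃ A₁ A₂, IsArc A₁ ∧ IsArc A₂ ∧ Disjoint A₁ A₂ ∧ A₁ ∪ A₂ = J \ B ∧
      ∀ A, IsArc A → A ⊆ J \ B → A ⊆ A₁ ∨ A ⊆ A₂ := by
  obtain ⟨a, l, hl0, hl1, rfl⟩ := hJ
  obtain ⟨b, m, hm0, hm1, rfl⟩ := hB
  rcases hm0.eq_or_lt with rfl | hm
  · exact ⟨_, ∅, ⟨a, l, hl0, hl1, rfl⟩, isArc_empty, disjoint_empty _, by simp,
      fun A _ hA => Or.inl (by simpa using hA)⟩
  rcases hl1.eq_or_lt with rfl | hl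
  · -- the whole circle, cut open at `π b ∈ B`
    rw [AddCircle.coe_image_Ico_eq, ← AddCircle.coe_image_Ico_eq 1 b]
    exact exists_arc_split_of_le le_rfl (by linarith) le_rfl hm fun h =>
      h.2 ⟨b, ⟨le_rfl, by linarith⟩, (AddCircle.coe_add_period 1 b).symm⟩
  · have hend : π (a + l) ∉ π '' Ico a (a + l) := by
      rintro ⟨x, hx, hxa⟩
      have := (AddCircle.coe_eq_coe_iff_of_mem_Ico (a := a) ⟨hx.1, by linarith [hx.2]⟩
        ⟨by linarith, by linarith⟩).1 hxa
      linarith [hx.2]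
    obtain ⟨b', hbb', hab', hb'l⟩ :=
      exists_lift_of_image_coe_Ico_subset hl.le hm hBJ fun h => hend (hBJ h)
    rw [hbb']
    exact exists_arc_split_of_le hab' hb'l hl.le hm fun h => hend h.1

theorem pairwiseDisjoint_insert_insert_erase {α : Type*} [DecidableEq (Set α)]
    {𝒥 : Finset (Set α)} {J₀ A₁ A₂ : Set α} (hpd : (𝒥 : Set (Set α)).PairwiseDisjoint id)
    (hJ₀ : J₀ ∈ 𝒥) (hA₁ : A₁ ⊆ J₀) (hA₂ : A₂ ⊆ J₀) (hA₁₂ : Disjoint A₁ A₂) :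
    ((insert A₁ (insert A₂ (𝒥.erase J₀)) : Finset (Set α)) : Set (Set α)).PairwiseDisjoint id := by
  have hJ₀disj : ∀ J ∈ (𝒥.erase J₀ : Set (Set α)), Disjoint J₀ J := fun J hJ =>
    hpd hJ₀ (Finset.mem_of_mem_erase hJ) (Finset.ne_of_mem_erase hJ).symm
  rw [Finset.coe_insert, Finset.coe_insert]
  refine ((hpd.subset (Finset.coe_subset.2 (Finset.erase_subset _ _))).insert
    fun J hJ _ => (hJ₀disj J hJ).mono_left hA₂).insert ?_
  rintro J (rfl | hJ) _
  exacts [hA₁₂, (hJ₀disj J hJ).mono_left hA₁]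

theorem biUnion_insert_insert_erase {α : Type*} [DecidableEq (Set α)]
    {𝒥 : Finset (Set α)} {J₀ A₁ A₂ B : Set α} (hpd : (𝒥 : Set (Set α)).PairwiseDisjoint id)
    (hJ₀ : J₀ ∈ 𝒥) (hB : B ⊆ J₀) (hA : A₁ ∪ A₂ = J₀ \ B) :
    ⋃ J ∈ insert A₁ (insert A₂ (𝒥.erase J₀)), J = (⋃ J ∈ 𝒥, J) \ B := by
  have h𝒥 : ⋃ J ∈ 𝒥, J = J₀ ∪ ⋃ J ∈ 𝒥.erase J₀, J := by
    conv_lhs => rw [← Finset.insert_erase hJ₀]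
    exact Finset.set_biUnion_insert J₀ _ id
  have hrest : ⋃ J ∈ 𝒥.erase J₀, J ⊆ Bᶜ := iUnion₂_subset fun J hJ =>
    (hpd hJ₀ (Finset.mem_of_mem_erase hJ) (Finset.ne_of_mem_erase hJ).symm).mono_left hB
      |>.subset_compl_left
  rw [Finset.set_biUnion_insert, Finset.set_biUnion_insert, h𝒥, ← union_assoc, hA,
    union_sdiff_distrib, sdiff_eq_left.2 (subset_compl_iff_disjoint_right.1 hrest)]

theorem exists_arc_partition_compl_biUnion {I : ℕ → Set Circle1} (hI : ∀ n, IsArc (I n))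
    (hdisj : Pairwise (Disjoint on I)) (s : Finset ℕ) :
    ∃ 𝒥 : Finset (Set Circle1), (∀ J ∈ 𝒥, IsArc J) ∧ (𝒥 : Set (Set Circle1)).PairwiseDisjoint id ∧
      ⋃ J ∈ 𝒥, J = (⋃ n ∈ s, I n)ᶜ ∧ ∀ m ∉ s, ∃ J ∈ 𝒥, I m ⊆ J := by
  classical
  induction s using Finset.induction_on with
  | empty =>
    exact ⟨{univ}, by simpa using isArc_univ, by simp, by simp,
      fun m _ => ⟨univ, Finset.mem_singleton_self _, subset_univ _⟩⟩
  | @insert n s hn ih =>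
    obtain ⟨𝒥, harc, hpd, hunion, hcov⟩ := ih
    obtain ⟨J₀, hJ₀, hnJ₀⟩ := hcov n hn
    obtain ⟨A₁, A₂, hA₁, hA₂, hA₁₂, hA, hsplit⟩ := (harc J₀ hJ₀).exists_split (hI n) hnJ₀
    have hA₁J₀ : A₁ ⊆ J₀ := (hA ▸ subset_union_left).trans sdiff_subset
    have hA₂J₀ : A₂ ⊆ J₀ := (hA ▸ subset_union_right).trans sdiff_subset
    refine ⟨insert A₁ (insert A₂ (𝒥.erase J₀)), ?_,
      pairwiseDisjoint_insert_insert_erase hpd hJ₀ hA₁J₀ hA₂J₀ hA₁₂, ?_, ?_⟩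
    · simp only [Finset.mem_insert]
      rintro J (rfl | rfl | hJ)
      exacts [hA₁, hA₂, harc J (Finset.mem_of_mem_erase hJ)]
    · rw [biUnion_insert_insert_erase hpd hJ₀ hnJ₀ hA, hunion, Finset.set_biUnion_insert,
        compl_union, sdiff_eq, inter_comm]
    · intro m hm
      rw [Finset.mem_insert, not_or] at hm
      obtain ⟨J, hJ, hmJ⟩ := hcov m hm.2
      by_cases hJJ₀ : J = J₀
      · subst hJJ₀
        rcases hsplit (I m) (hI m) (subset_sdiff.2 ⟨hmJ, hdisj hm.1⟩) with h | h
        exacts [⟨A₁, by simp, h⟩, ⟨A₂, by simp, h⟩]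
      · exact ⟨J, by simp [Finset.mem_erase, hJJ₀, hJ], hmJ⟩

theorem Premeasure.m_compl_biUnion_le {Λ : ℝ → ℝ} (hΛ : Majorant Λ) {μ : Premeasure} {C : ℝ}
    (hC : 0 ≤ C) (hμ : LambdaBounded Λ μ C) {F : Set Circle1} (hF0 : volume F = 0)
    {I : ℕ → Set Circle1} (hI : ∀ n, IsArc (I n)) (hdisj : Pairwise (Disjoint on I))
    (hcomp : Fᶜ = ⋃ n, I n) (hent : Summable fun n => arcLen (I n) * Λ (arcLen (I n)))
    (s : Finset ℕ) :
    μ.m (⋃ n ∈ s, I n)ᶜ ≤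
      C * ∑' m, (↑s : Set ℕ)ᶜ.indicator (fun n => arcLen (I n) * Λ (arcLen (I n))) m := by
  classical
  obtain ⟨𝒥, harc, hpd, hunion, hcov⟩ := exists_arc_partition_compl_biUnion hI hdisj s
  have hcov' : ∀ m, ∃ J, m ∉ s → J ∈ 𝒥 ∧ I m ⊆ J := fun m => by
    by_cases hm : m ∈ s
    · exact ⟨∅, fun h => (h hm).elim⟩
    · obtain ⟨J, hJ⟩ := hcov m hm
      exact ⟨J, fun _ => hJ⟩
  choose f hf using hcov'
  set T : Set Circle1 → Set ℕ := fun J => {m | m ∉ s ∧ f m = J}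
  have hcoverJ : ∀ J ∈ 𝒥, J ⊆ F ∪ ⋃ m ∈ T J, I m := by
    intro J hJ x hx
    by_cases hxF : x ∈ F
    · exact Or.inl hxF
    obtain ⟨m, hxm⟩ := mem_iUnion.1 (hcomp ▸ hxF : x ∈ ⋃ n, I n)
    have hms : m ∉ s := fun hms =>
      (hunion ▸ mem_biUnion hJ hx : x ∈ (⋃ n ∈ s, I n)ᶜ) (mem_biUnion hms hxm)
    have hfm : f m = J :=
      hpd.elim (hf m hms).1 hJ (not_disjoint_iff.2 ⟨x, (hf m hms).2 hxm, hx⟩)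
    exact Or.inr (mem_biUnion ⟨hms, hfm⟩ hxm)
  calc μ.m (⋃ n ∈ s, I n)ᶜ = ∑ J ∈ 𝒥, μ.m J := by
        simpa [← hunion, μ.empty] using μ.m_union_biUnion harc hpd (S := ∅) (by simp)
    _ ≤ ∑ J ∈ 𝒥, C * ∑' m, (T J).indicator (fun n => arcLen (I n) * Λ (arcLen (I n))) m :=
        Finset.sum_le_sum fun J hJ => (hμ J (harc J hJ)).trans <| by
          rw [mul_assoc]
          exact mul_le_mul_of_nonneg_left (hΛ.entropy_le_tsum_of_subset_union hF0 hent
            (fun m hm => hm.2 ▸ (hf m hm.1).2) (hcoverJ J hJ)) hC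
    _ = C * ∑' m, ∑ J ∈ 𝒥, (T J).indicator (fun n => arcLen (I n) * Λ (arcLen (I n))) m := by
        rw [← Finset.mul_sum, Summable.tsum_finsetSum fun J _ => hent.indicator _]
    _ = C * ∑' m, (↑s : Set ℕ)ᶜ.indicator (fun n => arcLen (I n) * Λ (arcLen (I n))) m := by
        congr 1
        refine tsum_congr fun m => ?_
        by_cases hm : m ∈ s
        · simp [T, Set.indicator, hm]
        · simp [T, Set.indicator, hm, (hf m hm).1]

theorem stmt3_general (Λ : ℝ → ℝ) (hΛ : Majorant Λ) (μ : Premeasure) (C : ℝ)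
    (hμ : LambdaBounded Λ μ C)
    (F : Set Circle1) (hF0 : volume F = 0)
    (I : ℕ → Set Circle1) (hI : ∀ n, IsArc (I n))
    (hdisj : Pairwise (Function.onFun Disjoint I))
    (hcomp : Fᶜ = ⋃ n, I n)
    (hent : Summable fun n => arcLen (I n) * Λ (arcLen (I n))) :
    Summable (fun n => μ.m (I n)) ∧ -(∑' n, μ.m (I n)) ≤ 0 := by
  set C' := max C 0
  have hμ' : LambdaBounded Λ μ C' := hμ.mono hΛ (le_max_left C 0)
  refine (summable_and_tsum_nonneg_of_le_of_sum_sub_tsum_le (hent.mul_left C')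
    (fun n => (hμ' _ (hI n)).trans_eq (mul_assoc _ _ _)) fun s => ?_).imp_right neg_nonpos.2
  have hK := μ.m_compl_biUnion_le hΛ (le_max_right C 0) hμ' hF0 hI hdisj hcomp hent s
  have hzero := μ.m_compl_biUnion_add_sum hI hdisj s
  have htail := hent.sum_add_tsum_compl (s := s)
  rw [tsum_subtype (↑s : Set ℕ)ᶜ fun n => arcLen (I n) * Λ (arcLen (I n))] at htail
  rw [← Finset.mul_sum, tsum_mul_left]
  linear_combination hK + C' * htail - hzero

/-- The `Λ`-singular part `μ_s(F) = −Σₙ μ(Iₙ)` of a `Λ`-bounded premeasure on a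
`Λ`-Carleson set `F` (with complementary arcs `Iₙ`, `|I₁| ≥ |I₂| ≥ ⋯`) is a
convergent sum and `μ_s(F) ≤ 0`. -/
theorem stmt3 (Λ : ℝ → ℝ) (hΛ : Majorant Λ) (μ : Premeasure) (C : ℝ)
    (hμ : LambdaBounded Λ μ C)
    (F : Set Circle1) (hF : IsClosed F) (hFne : F.Nonempty) (hF0 : volume F = 0)
    (I : ℕ → Set Circle1) (hI : ∀ n, IsArc (I n))
    (hdisj : Pairwise (Function.onFun Disjoint I))
    (hcomp : Fᶜ = ⋃ n, I n)
    (horder : Antitone fun n => arcLen (I n))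
    (hent : Summable fun n => arcLen (I n) * Λ (arcLen (I n))) :
    Summable (fun n => μ.m (I n)) ∧ -(∑' n, μ.m (I n)) ≤ 0 :=
  stmt3_general Λ hΛ μ C hμ F hF0 I hI hdisj hcomp hent
end
end

section
/- Let μ be a Λ-bounded premeasure on 𝕋. Then its Poisson integral P[μ](z) = ∫_𝕋 (1−|z|²)/|e^{iθ}−z|² dμ(θ) satisfies P[μ](z) ≤ 10‖μ‖⁺_Λ · Λ(1−|z|) for all z ∈ 𝔻. -/
open MeasureTheory Filter Metric Set
open scoped Topology ENNReal

noncomputable section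

/-- The arc starting at angle `a` of length `l` (angles normalized to `[0,1)`). -/
def stdArc (a l : ℝ) : Set Circle1 := (fun x : ℝ => (x : Circle1)) '' Set.Ico a (a + l)

/-!
Write `D` for the `1`-periodic extension of `t ↦ μ(stdArc 0 t)`, `t₀ = arg z / 2π`, and `K`, `K'`
for the Poisson kernel in the angle (measured in turns) and its derivative, so that the left-hand
side is `-∫₀¹ K'(t - t₀) D(t) dt`. Centring the period at `t₀` and pairing `u` with `-u` (`K'` is
odd) turns it into `∫₀^{1/2} -K'(u) μ(J_u) du`, where `J_u` is the arc of length `2u` centred at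
`t₀`. On `[0, 1/2]` we have `K' ≤ 0`, and the majorant properties give
`μ(J_u) ≤ C (2u) Λ(2u) ≤ C max(δ, 2u) Λ(δ)` with `δ = 1 - |z|`. It remains to see
`∫₀^{1/2} -K'(u) (δ + 2u) du ≤ 10`: integrating by parts once more, it is at most
`δ K(0) + 2 ∫₀^{1/2} K = 1 + |z| + 2 ∫₀^{1/2} K`, and the bound `K(u) ≤ 4δ / (δ² + 4u²)`
integrates to an arctangent, giving `∫₀^{1/2} K ≤ π`.

The integrals make sense because `D` is bounded and left continuous (by the continuity axiom of
premeasures), hence measurable.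
-/

lemma measurable_of_tendsto_sub_nhdsGE {β : Type*} [TopologicalSpace β]
    [TopologicalSpace.PseudoMetrizableSpace β] [MeasurableSpace β] [BorelSpace β] {f : ℝ → β}
    (hf : ∀ x, Tendsto (fun h => f (x - h)) (𝓝[≥] 0) (𝓝 (f x))) : Measurable f := by
  refine measurable_of_tendsto_metrizable (f := fun n x => f (⌊(n + 1 : ℝ) * x⌋ / (n + 1)))
    (fun n => ?_) (tendsto_pi_nhds.2 fun x => ?_)
  · exact (measurable_of_countable (fun k : ℤ => f (k / (n + 1)))).comp
      (Int.measurable_floor.comp (measurable_const.mul measurable_id))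
  · have hgap : ∀ n : ℕ, x - ⌊(n + 1 : ℝ) * x⌋ / (n + 1) ∈ Ico (0 : ℝ) (1 / (n + 1)) := fun n => by
      have hn : (0 : ℝ) < n + 1 := by positivity
      have hfract : x - ⌊(n + 1 : ℝ) * x⌋ / (n + 1) = Int.fract ((n + 1 : ℝ) * x) / (n + 1) := by
        rw [Int.fract]; field_simp
      rw [hfract]
      exact ⟨div_nonneg (Int.fract_nonneg _) hn.le,
        div_lt_div_of_pos_right (Int.fract_lt_one _) hn⟩
    have hlim : Tendsto (fun n : ℕ => x - ⌊(n + 1 : ℝ) * x⌋ / (n + 1)) atTop (𝓝[≥] 0) :=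
      tendsto_nhdsWithin_iff.2 ⟨tendsto_of_tendsto_of_tendsto_of_le_of_le tendsto_const_nhds
        tendsto_one_div_add_atTop_nhds_zero_nat (fun n => (hgap n).1) (fun n => (hgap n).2.le),
        Eventually.of_forall fun n => (hgap n).1⟩
    simpa [Function.comp_def] using (hf x).comp hlim

open intervalIntegral in
lemma integral_comp_sub_mul_eq_integral_half {φ D : ℝ → ℝ} (hφ : Continuous φ)
    (hφp : Function.Periodic φ 1) (hφodd : ∀ u, φ (-u) = -φ u) (hDp : Function.Periodic D 1)
    (hD : ∀ a b, IntervalIntegrable D volume a b) (t₀ : ℝ) :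
    ∫ t in (0 : ℝ)..1, φ (t - t₀) * D t =
      ∫ u in (0 : ℝ)..1 / 2, φ u * (D (t₀ + u) - D (t₀ - u)) := by
  set g := fun t => φ (t - t₀) * D t
  have hg : ∀ a b, IntervalIntegrable g volume a b := fun a b =>
    (hD a b).continuousOn_mul (hφ.comp (continuous_sub_right t₀)).continuousOn
  have hgp : Function.Periodic g 1 := fun t => by
    simp only [g, add_sub_right_comm, hφp _, hDp t]
  have hright : IntervalIntegrable (fun u => g (t₀ + u)) volume 0 (1 / 2) := by
    simpa using (hg t₀ (t₀ + 1 / 2)).comp_add_left t₀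
  have hleft : IntervalIntegrable (fun u => g (t₀ - u)) volume 0 (1 / 2) := by
    simpa using (hg t₀ (t₀ - 1 / 2)).comp_sub_left t₀
  calc ∫ t in (0 : ℝ)..1, g t = ∫ t in (t₀ - 1 / 2)..(t₀ + 1 / 2), g t := by
        have := hgp.intervalIntegral_add_eq 0 (t₀ - 1 / 2)
        rwa [zero_add, show t₀ - 1 / 2 + 1 = t₀ + 1 / 2 by ring] at this
    _ = (∫ t in (t₀ - 1 / 2)..t₀, g t) + ∫ t in t₀..(t₀ + 1 / 2), g t :=
        (integral_add_adjacent_intervals (hg _ _) (hg _ _)).symm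
    _ = (∫ u in (0 : ℝ)..1 / 2, g (t₀ - u)) + ∫ u in (0 : ℝ)..1 / 2, g (t₀ + u) := by
        rw [integral_comp_sub_left, integral_comp_add_left, sub_zero, add_zero]
    _ = ∫ u in (0 : ℝ)..1 / 2, φ u * (D (t₀ + u) - D (t₀ - u)) := by
        rw [← integral_add hleft hright]
        refine integral_congr fun u _ => ?_
        simp only [g, sub_sub_cancel_left, add_sub_cancel_left, hφodd]
        ring

lemma stdArc_isArc (a : ℝ) {l : ℝ} (h0 : 0 ≤ l) (h1 : l ≤ 1) : IsArc (stdArc a l) :=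
  ⟨a, l, h0, h1, rfl⟩

lemma stdArc_zero (a : ℝ) : stdArc a 0 = ∅ := by
  simp [stdArc]

lemma stdArc_one (a : ℝ) : stdArc a 1 = univ :=
  AddCircle.coe_image_Ico_eq 1 a

lemma stdArc_add_int (a l : ℝ) (k : ℤ) : stdArc (a + k) l = stdArc a l := by
  rw [stdArc, stdArc, add_right_comm, ← image_add_const_Ico, image_image]
  simp

lemma stdArc_add (a : ℝ) {l m : ℝ} (hl : 0 ≤ l) (hm : 0 ≤ m) :
    stdArc a (l + m) = stdArc a l ∪ stdArc (a + l) m := by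
  rw [stdArc, stdArc, stdArc, ← image_union, Ico_union_Ico_eq_Ico (by linarith) (by linarith),
    add_assoc]

lemma disjoint_stdArc (a : ℝ) {l m : ℝ} (hl : 0 ≤ l) (hm : 0 ≤ m) (hlm : l + m ≤ 1) :
    Disjoint (stdArc a l) (stdArc (a + l) m) := by
  rw [disjoint_left]
  rintro _ ⟨x, hx, rfl⟩ ⟨y, hy, hxy⟩
  have hx' : x ∈ Ico a (a + 1) := ⟨hx.1, by linarith [hx.2]⟩
  have hy' : y ∈ Ico a (a + 1) := ⟨by linarith [hy.1], by linarith [hy.2]⟩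
  rw [AddCircle.coe_eq_coe_iff_of_mem_Ico hy' hx'] at hxy
  linarith [hx.2, hy.1]

lemma volume_stdArc (a : ℝ) {l : ℝ} (h0 : 0 ≤ l) (h1 : l ≤ 1) :
    volume (stdArc a l) = ENNReal.ofReal l := by
  rcases h1.eq_or_lt with rfl | h1
  · simp [stdArc_one]
  set t := a + l - 1
  have hsub : Ico a (a + l) ⊆ Ioc t (t + 1) := fun x hx => ⟨by linarith [hx.1], by linarith [hx.2]⟩
  have hpre : stdArc a l =
      AddCircle.measurableEquivIoc 1 t ⁻¹' (Subtype.val ⁻¹' Ico a (a + l)) := by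
    ext y
    constructor
    · rintro ⟨x, hx, rfl⟩
      change (AddCircle.equivIoc 1 t x : ℝ) ∈ Ico a (a + l)
      rwa [AddCircle.equivIoc_coe_eq (hsub hx)]
    · intro hy
      exact ⟨_, hy, AddCircle.coe_equivIoc⟩
  have hmp : MeasurePreserving (AddCircle.measurableEquivIoc 1 t) volume
      (Measure.comap Subtype.val volume) := AddCircle.measurePreserving_equivIoc 1
  rw [hpre, hmp.measure_preimage_equiv, comap_subtype_coe_apply measurableSet_Ioc,
    Subtype.image_preimage_coe, inter_eq_right.2 hsub, Real.volume_Ico, add_sub_cancel_left]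

lemma arcLen_stdArc (a : ℝ) {l : ℝ} (h0 : 0 ≤ l) (h1 : l ≤ 1) : arcLen (stdArc a l) = l := by
  rw [arcLen, volume_stdArc a h0 h1, ENNReal.toReal_ofReal h0]

lemma stdArc_sub_mono (t : ℝ) {h h' : ℝ} (hh : h ≤ h') : stdArc (t - h) h ⊆ stdArc (t - h') h' := by
  rw [stdArc, stdArc, sub_add_cancel, sub_add_cancel]
  exact image_mono (Ico_subset_Ico_left (by linarith))

lemma iInter_stdArc_sub_eq_empty (t : ℝ) {h : ℕ → ℝ} (h1 : ∀ n, h n ≤ 1)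
    (hlim : Tendsto h atTop (𝓝 0)) : ⋂ n, stdArc (t - h n) (h n) = ∅ := by
  refine eq_empty_of_forall_notMem fun y hy => ?_
  rw [mem_iInter] at hy
  obtain ⟨x, hx, rfl⟩ := hy 0
  rw [sub_add_cancel] at hx
  have hle : ∀ n, t - h n ≤ x := fun n => by
    obtain ⟨x', hx', hxx'⟩ := hy n
    rw [sub_add_cancel] at hx'
    rw [AddCircle.coe_eq_coe_iff_of_mem_Ico (a := t - 1)
      ⟨by linarith [h1 n, hx'.1], by linarith [hx'.2]⟩
      ⟨by linarith [h1 0, hx.1], by linarith [hx.2]⟩] at hxx'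
    exact hxx' ▸ hx'.1
  have hlim' : Tendsto (fun n => t - h n) atTop (𝓝 (t - 0)) := tendsto_const_nhds.sub hlim
  rw [sub_zero] at hlim'
  have : t ≤ x := le_of_tendsto hlim' (Eventually.of_forall hle)
  linarith [hx.2]

namespace Premeasure

variable (μ : Premeasure)

lemma m_stdArc_zero (a : ℝ) : μ.m (stdArc a 0) = 0 := by
  rw [stdArc_zero, μ.empty]

lemma m_stdArc_add (a : ℝ) {l m : ℝ} (hl : 0 ≤ l) (hm : 0 ≤ m) (hlm : l + m ≤ 1) :
    μ.m (stdArc a (l + m)) = μ.m (stdArc a l) + μ.m (stdArc (a + l) m) := by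
  rw [stdArc_add a hl hm]
  exact μ.union _ _ (disjoint_stdArc a hl hm hlm) (stdArc_isArc _ hm (by linarith))

lemma m_stdArc_compl (a : ℝ) {l : ℝ} (h0 : 0 ≤ l) (h1 : l ≤ 1) :
    μ.m (stdArc (a + l) (1 - l)) = -μ.m (stdArc a l) := by
  have h := μ.m_stdArc_add a h0 (sub_nonneg.2 h1) (by linarith)
  rw [add_sub_cancel, stdArc_one, μ.total] at h
  linarith

/-- The distribution function `μ̂(t) = μ(stdArc 0 t)`, extended `1`-periodically. -/
def distrib (t : ℝ) : ℝ := μ.m (stdArc 0 (Int.fract t))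

lemma distrib_add_int (t : ℝ) (k : ℤ) : μ.distrib (t + k) = μ.distrib t := by
  simp [distrib]

lemma distrib_periodic : Function.Periodic μ.distrib 1 := by
  simpa using (μ.distrib_add_int · 1)

lemma distrib_of_mem_Ico {t : ℝ} (ht : t ∈ Ico (0 : ℝ) 1) : μ.distrib t = μ.m (stdArc 0 t) := by
  rw [distrib, Int.fract_eq_self.2 ht]

lemma distrib_of_mem_Ioc {t : ℝ} (ht : t ∈ Ioc (0 : ℝ) 1) : μ.distrib t = μ.m (stdArc 0 t) := by
  rcases ht.2.lt_or_eq with h | rfl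
  · exact μ.distrib_of_mem_Ico ⟨ht.1.le, h⟩
  · rw [distrib, Int.fract_one, μ.m_stdArc_zero, stdArc_one, μ.total]

lemma m_stdArc_eq_distrib_sub (a : ℝ) {l : ℝ} (h0 : 0 ≤ l) (h1 : l ≤ 1) :
    μ.m (stdArc a l) = μ.distrib (a + l) - μ.distrib a := by
  rw [← Int.fract_add_floor a, stdArc_add_int, add_right_comm, μ.distrib_add_int,
    μ.distrib_add_int]
  have hb : Int.fract a ∈ Ico (0 : ℝ) 1 := ⟨Int.fract_nonneg a, Int.fract_lt_one a⟩
  generalize Int.fract a = b at hb ⊢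
  rw [μ.distrib_of_mem_Ico hb]
  rcases lt_or_ge (b + l) 1 with h | h
  · rw [μ.distrib_of_mem_Ico ⟨by linarith [hb.1], h⟩, μ.m_stdArc_add 0 hb.1 h0 h.le, zero_add]
    ring
  · have hsplit := μ.m_stdArc_add b (sub_nonneg.2 hb.2.le) (by linarith : 0 ≤ b + l - 1)
      (by linarith)
    rw [show 1 - b + (b + l - 1) = l by ring, show b + (1 - b) = 0 + ((1 : ℤ) : ℝ) by simp,
      stdArc_add_int] at hsplit
    have hcompl := μ.m_stdArc_compl 0 hb.1 hb.2.le
    rw [zero_add] at hcompl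
    have hwrap : μ.distrib (b + l) = μ.m (stdArc 0 (b + l - 1)) := by
      rw [← μ.distrib_of_mem_Ico ⟨by linarith, by linarith [hb.2]⟩,
        ← μ.distrib_add_int (b + l - 1) 1]
      norm_num
    rw [hsplit, hcompl, hwrap]
    ring

end Premeasure

namespace Majorant

variable {Λ : ℝ → ℝ} (hΛ : Majorant Λ)
include hΛ

lemma pos {t : ℝ} (h0 : 0 < t) (h1 : t ≤ 1) : 0 < Λ t := hΛ.1 t ⟨h0, h1⟩

lemma self_mul_nonneg {t : ℝ} (h0 : 0 ≤ t) (h1 : t ≤ 1) : 0 ≤ t * Λ t := by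
  rcases h0.eq_or_lt with rfl | h0
  · simp
  · exact (mul_pos h0 (hΛ.pos h0 h1)).le

lemma self_mul_mono {s t : ℝ} (hs : 0 ≤ s) (hst : s ≤ t) (ht : t ≤ 1) :
    s * Λ s ≤ t * Λ t := by
  rcases hs.eq_or_lt with rfl | hs
  · simpa using hΛ.self_mul_nonneg hst ht
  · exact hΛ.2.2.1 ⟨hs, hst.trans ht⟩ ⟨hs.trans_le hst, ht⟩ hst

lemma self_mul_le_max_mul {s δ : ℝ} (hs0 : 0 ≤ s) (hs1 : s ≤ 1) (hδ0 : 0 < δ) (hδ1 : δ ≤ 1) :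
    s * Λ s ≤ max δ s * Λ δ := by
  rcases le_total s δ with hsδ | hδs
  · rw [max_eq_left hsδ]
    exact hΛ.self_mul_mono hs0 hsδ hδ1
  · rw [max_eq_right hδs]
    exact mul_le_mul_of_nonneg_left (hΛ.2.1 ⟨hδ0, hδ1⟩ ⟨hδ0.trans_le hδs, hs1⟩ hδs) hs0

lemma tendsto_self_mul_nhdsGE : Tendsto (fun t => t * Λ t) (𝓝[≥] 0) (𝓝 0) := by
  rw [← Ioi_insert, nhdsWithin_insert, tendsto_sup]
  exact ⟨by simpa using tendsto_pure_nhds (fun t => t * Λ t) 0, hΛ.2.2.2.1⟩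

end Majorant

namespace LambdaBounded

variable {Λ : ℝ → ℝ} {μ : Premeasure} {C : ℝ} (hμ : LambdaBounded Λ μ C)
include hμ

lemma m_stdArc_le (a : ℝ) {l : ℝ} (h0 : 0 ≤ l) (h1 : l ≤ 1) :
    μ.m (stdArc a l) ≤ C * (l * Λ l) := by
  simpa [arcLen_stdArc a h0 h1, mul_assoc] using hμ _ (stdArc_isArc a h0 h1)

lemma abs_m_stdArc_le (hΛ : Majorant Λ) (hC : 0 ≤ C) (a : ℝ) {l : ℝ} (h0 : 0 ≤ l) (h1 : l ≤ 1) :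
    |μ.m (stdArc a l)| ≤ C * Λ 1 := by
  have hbound : ∀ a l, 0 ≤ l → l ≤ 1 → μ.m (stdArc a l) ≤ C * Λ 1 := fun a l h0 h1 =>
    (hμ.m_stdArc_le a h0 h1).trans <| mul_le_mul_of_nonneg_left
      (by simpa using hΛ.self_mul_mono h0 h1 le_rfl) hC
  rw [abs_le]
  refine ⟨?_, hbound a l h0 h1⟩
  have := hbound (a + l) (1 - l) (sub_nonneg.2 h1) (by linarith)
  rw [μ.m_stdArc_compl a h0 h1] at this
  linarith

lemma abs_distrib_le (hΛ : Majorant Λ) (hC : 0 ≤ C) (t : ℝ) : |μ.distrib t| ≤ C * Λ 1 :=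
  hμ.abs_m_stdArc_le hΛ hC 0 (Int.fract_nonneg t) (Int.fract_lt_one t).le

lemma tendsto_m_stdArc_sub (hΛ : Majorant Λ) (hC : 0 ≤ C) (t : ℝ) :
    Tendsto (fun h => μ.m (stdArc (t - h) h)) (𝓝[≥] 0) (𝓝 0) := by
  have hsmall : Tendsto (fun h => C * (h * Λ h)) (𝓝[≥] 0) (𝓝 0) := by
    simpa using hΛ.tendsto_self_mul_nhdsGE.const_mul C
  have hle_one : ∀ᶠ h in 𝓝[≥] (0 : ℝ), h ∈ Icc 0 1 :=
    Icc_mem_nhdsGE one_pos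
  refine tendsto_order.2 ⟨fun a ha => ?_, fun a ha => ?_⟩
  · -- Λ-boundedness only bounds `μ` from above; from below we use the continuity axiom along
    -- the arcs of length `1 / (n + 1)` ending at `t`.
    set len : ℕ → ℝ := fun n => 1 / (n + 1)
    have len0 : ∀ n, 0 < len n := fun n => by positivity
    have len1 : ∀ n, len n ≤ 1 := fun n => div_le_one_of_le₀ (by simp) (by positivity)
    have lenlim : Tendsto len atTop (𝓝 0) := tendsto_one_div_add_atTop_nhds_zero_nat
    have hI := μ.cont _ (fun n => stdArc_isArc _ (len0 n).le (len1 n))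
      (fun n => stdArc_sub_mono t (one_div_le_one_div_of_le (by positivity) (by simp)))
      (iInter_stdArc_sub_eq_empty t len1 lenlim)
    have hlow : Tendsto (fun n => μ.m (stdArc (t - len n) (len n)) - C * (len n * Λ (len n)))
        atTop (𝓝 0) := by
      simpa using hI.sub (hsmall.comp (tendsto_nhdsWithin_iff.2
        ⟨lenlim, Eventually.of_forall fun n => (len0 n).le⟩))
    obtain ⟨n, hlt⟩ := (hlow.eventually (lt_mem_nhds ha)).exists
    filter_upwards [Icc_mem_nhdsGE (len0 n)] with h hh
    have hsplit := μ.m_stdArc_add (t - len n) (sub_nonneg.2 hh.2) hh.1 (by linarith [len1 n])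
    rw [sub_add_cancel, show t - len n + (len n - h) = t - h by ring] at hsplit
    have hrest := hμ.m_stdArc_le (t - len n) (sub_nonneg.2 hh.2) (by linarith [len1 n, hh.1])
    have hmono := mul_le_mul_of_nonneg_left
      (hΛ.self_mul_mono (sub_nonneg.2 hh.2) (by linarith [hh.1]) (len1 n)) hC
    linarith
  · filter_upwards [hsmall.eventually (gt_mem_nhds ha), hle_one] with h hlt hh
    exact (hμ.m_stdArc_le _ hh.1 hh.2).trans_lt hlt

lemma tendsto_distrib_sub (hΛ : Majorant Λ) (hC : 0 ≤ C) (t : ℝ) :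
    Tendsto (fun h => μ.distrib (t - h)) (𝓝[≥] 0) (𝓝 (μ.distrib t)) := by
  have hlim := tendsto_const_nhds (x := μ.distrib t) |>.sub (hμ.tendsto_m_stdArc_sub hΛ hC t)
  rw [sub_zero] at hlim
  refine hlim.congr' ?_
  filter_upwards [Icc_mem_nhdsGE one_pos] with h hh
  rw [μ.m_stdArc_eq_distrib_sub _ hh.1 hh.2, sub_add_cancel]
  ring

lemma measurable_distrib (hΛ : Majorant Λ) (hC : 0 ≤ C) : Measurable μ.distrib :=
  measurable_of_tendsto_sub_nhdsGE (hμ.tendsto_distrib_sub hΛ hC)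

lemma intervalIntegrable_distrib (hΛ : Majorant Λ) (hC : 0 ≤ C) (a b : ℝ) :
    IntervalIntegrable μ.distrib volume a b :=
  intervalIntegrable_const.mono_fun' (hμ.measurable_distrib hΛ hC).aestronglyMeasurable
    (ae_of_all _ fun t => hμ.abs_distrib_le hΛ hC t)

lemma m_stdArc_le_max_mul (hΛ : Majorant Λ) (hC : 0 ≤ C) (a : ℝ) {l δ : ℝ} (h0 : 0 ≤ l)
    (h1 : l ≤ 1) (hδ0 : 0 < δ) (hδ1 : δ ≤ 1) : μ.m (stdArc a l) ≤ C * Λ δ * max δ l := by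
  have := mul_le_mul_of_nonneg_left (hΛ.self_mul_le_max_mul h0 h1 hδ0 hδ1) hC
  linarith [hμ.m_stdArc_le a h0 h1]

lemma neg_integral_mul_distrib_sub_le (hΛ : Majorant Λ) (hC : 0 ≤ C) {w : ℝ → ℝ}
    (hw : Continuous w) (hw0 : ∀ u ∈ Icc (0 : ℝ) (1 / 2), w u ≤ 0) (t₀ : ℝ) {δ : ℝ}
    (hδ0 : 0 < δ) (hδ1 : δ ≤ 1) :
    -∫ u in (0 : ℝ)..1 / 2, w u * (μ.distrib (t₀ + u) - μ.distrib (t₀ - u)) ≤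
      C * Λ δ * ∫ u in (0 : ℝ)..1 / 2, -w u * max δ (2 * u) := by
  have hD := hμ.intervalIntegrable_distrib hΛ hC
  have hplus : IntervalIntegrable (fun u => μ.distrib (t₀ + u)) volume 0 (1 / 2) := by
    simpa using (hD t₀ (t₀ + 1 / 2)).comp_add_left t₀
  have hminus : IntervalIntegrable (fun u => μ.distrib (t₀ - u)) volume 0 (1 / 2) := by
    simpa using (hD t₀ (t₀ - 1 / 2)).comp_sub_left t₀
  rw [← intervalIntegral.integral_neg, ← intervalIntegral.integral_const_mul]
  refine intervalIntegral.integral_mono_on (by norm_num)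
    ((hplus.sub hminus).continuousOn_mul hw.continuousOn).neg
    (Continuous.intervalIntegrable (by fun_prop) _ _) fun u hu => ?_
  have hsym : μ.distrib (t₀ + u) - μ.distrib (t₀ - u) = μ.m (stdArc (t₀ - u) (2 * u)) := by
    rw [μ.m_stdArc_eq_distrib_sub (l := 2 * u) _ (by linarith [hu.1]) (by linarith [hu.2])]
    ring_nf
  rw [hsym]
  have := mul_le_mul_of_nonneg_left (hμ.m_stdArc_le_max_mul hΛ hC (t₀ - u) (l := 2 * u)
    (by linarith [hu.1]) (by linarith [hu.2]) hδ0 hδ1) (neg_nonneg.2 (hw0 u hu))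
  linarith

end LambdaBounded

namespace Poisson

open Real intervalIntegral

/-- `|e^{2πiu} - r|²`; the Poisson kernel is written in the angle `u` measured in turns. -/
def denom (r u : ℝ) : ℝ := 1 - 2 * r * cos (2 * π * u) + r ^ 2

def kernel (r u : ℝ) : ℝ := (1 - r ^ 2) / denom r u

def kernelDeriv (r u : ℝ) : ℝ := -(4 * π * r * (1 - r ^ 2) * sin (2 * π * u)) / denom r u ^ 2

variable {r : ℝ}

lemma denom_eq (r u : ℝ) : denom r u = (1 - r) ^ 2 + 4 * r * sin (π * u) ^ 2 := by
  have h := cos_sq_add_sin_sq (π * u)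
  rw [denom, show 2 * π * u = 2 * (π * u) by ring, cos_two_mul]
  linear_combination (-4 * r) * h

lemma denom_zero (r : ℝ) : denom r 0 = (1 - r) ^ 2 := by
  simp [denom_eq]

lemma sq_le_denom (hr0 : 0 ≤ r) (u : ℝ) : (1 - r) ^ 2 ≤ denom r u := by
  rw [denom_eq]
  have := sq_nonneg (sin (π * u))
  nlinarith

lemma denom_pos (hr0 : 0 ≤ r) (hr1 : r < 1) (u : ℝ) : 0 < denom r u :=
  (pow_pos (sub_pos.2 hr1) 2).trans_le (sq_le_denom hr0 u)

lemma denom_periodic (r : ℝ) : Function.Periodic (denom r) 1 := fun u => by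
  simp [denom, mul_add, cos_add_two_pi]

lemma denom_neg (r u : ℝ) : denom r (-u) = denom r u := by
  simp [denom]

lemma kernel_nonneg (hr0 : 0 ≤ r) (hr1 : r < 1) (u : ℝ) : 0 ≤ kernel r u :=
  div_nonneg (by nlinarith) (denom_pos hr0 hr1 u).le

lemma sub_mul_kernel_zero (hr1 : r < 1) : (1 - r) * kernel r 0 = 1 + r := by
  have : 1 - r ≠ 0 := (sub_pos.2 hr1).ne'
  rw [kernel, denom_zero]
  field_simp
  ring

lemma continuous_denom (r : ℝ) : Continuous (denom r) := by
  unfold denom; fun_prop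

lemma continuous_kernel (hr0 : 0 ≤ r) (hr1 : r < 1) : Continuous (kernel r) :=
  continuous_const.div (continuous_denom r) fun u => (denom_pos hr0 hr1 u).ne'

lemma continuous_kernelDeriv (hr0 : 0 ≤ r) (hr1 : r < 1) : Continuous (kernelDeriv r) :=
  (by fun_prop : Continuous fun u => -(4 * π * r * (1 - r ^ 2) * sin (2 * π * u))).div
    ((continuous_denom r).pow 2) fun u => pow_ne_zero 2 (denom_pos hr0 hr1 u).ne'

lemma hasDerivAt_kernel (hr0 : 0 ≤ r) (hr1 : r < 1) (u : ℝ) :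
    HasDerivAt (kernel r) (kernelDeriv r u) u := by
  have hcos : HasDerivAt (fun u => cos (2 * π * u)) (-sin (2 * π * u) * (2 * π)) u := by
    simpa using ((hasDerivAt_id' u).const_mul (2 * π)).cos
  have hden : HasDerivAt (denom r) (4 * π * r * sin (2 * π * u)) u :=
    (((hcos.const_mul (2 * r)).const_sub 1).add_const (r ^ 2)).congr_deriv (by ring)
  exact ((hasDerivAt_const u (1 - r ^ 2)).div hden (denom_pos hr0 hr1 u).ne').congr_deriv
    (by rw [kernelDeriv]; ring)

lemma kernelDeriv_periodic (r : ℝ) : Function.Periodic (kernelDeriv r) 1 := fun u => by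
  simp only [kernelDeriv, denom_periodic r u, mul_add, mul_one, sin_add_two_pi]

lemma kernelDeriv_neg (r u : ℝ) : kernelDeriv r (-u) = -kernelDeriv r u := by
  simp only [kernelDeriv, denom_neg, mul_neg, sin_neg]
  ring

lemma kernelDeriv_nonpos (hr0 : 0 ≤ r) (hr1 : r < 1) {u : ℝ} (hu : u ∈ Icc (0 : ℝ) (1 / 2)) :
    kernelDeriv r u ≤ 0 := by
  have hsin : 0 ≤ sin (2 * π * u) :=
    sin_nonneg_of_nonneg_of_le_pi (by nlinarith [pi_pos, hu.1]) (by nlinarith [pi_pos, hu.2])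
  have : 0 ≤ 4 * π * r * (1 - r ^ 2) * sin (2 * π * u) := by
    have := pi_pos
    have : 0 ≤ 1 - r ^ 2 := by nlinarith
    positivity
  exact div_nonpos_of_nonpos_of_nonneg (neg_nonpos.2 this) (sq_nonneg _)

lemma kernel_le (hr0 : 0 ≤ r) (hr1 : r < 1) {u : ℝ} (hu : u ∈ Icc (0 : ℝ) (1 / 2)) :
    kernel r u ≤ 4 * (1 - r) / ((1 - r) ^ 2 + 4 * u ^ 2) := by
  have hsin : 2 * u ≤ sin (π * u) := by
    have := mul_le_sin (x := π * u) (by nlinarith [pi_pos, hu.1]) (by nlinarith [pi_pos, hu.2])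
    rwa [← mul_assoc, div_mul_cancel₀ _ pi_pos.ne'] at this
  have hden : (1 - r) ^ 2 + 16 * r * u ^ 2 ≤ denom r u := by
    rw [denom_eq]
    nlinarith [mul_le_mul hsin hsin (by linarith [hu.1]) (by linarith [hu.1]), hu.1]
  have hδ : 0 < 1 - r := sub_pos.2 hr1
  calc kernel r u ≤ (1 - r ^ 2) / ((1 - r) ^ 2 + 16 * r * u ^ 2) :=
        div_le_div_of_nonneg_left (by nlinarith) (by positivity) hden
    _ ≤ 4 * (1 - r) / ((1 - r) ^ 2 + 4 * u ^ 2) := by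
        rw [div_le_div_iff₀ (by positivity) (by positivity)]
        have hu2 : u ^ 2 ≤ 1 / 4 := by nlinarith [hu.1, hu.2]
        nlinarith [mul_nonneg hδ.le (sq_nonneg u), mul_nonneg hr0 (sq_nonneg u),
          mul_nonneg (mul_nonneg hδ.le hr0) (sq_nonneg u), mul_nonneg hδ.le (sub_nonneg.2 hu2)]

lemma integral_kernel_le (hr0 : 0 ≤ r) (hr1 : r < 1) : ∫ u in (0 : ℝ)..1 / 2, kernel r u ≤ π := by
  have hδ : 0 < 1 - r := sub_pos.2 hr1
  have harctan : ∀ u, HasDerivAt (fun u => 2 * arctan (2 * u / (1 - r)))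
      (4 * (1 - r) / ((1 - r) ^ 2 + 4 * u ^ 2)) u := fun u => by
    have := (((hasDerivAt_id' u).const_mul 2).div_const (1 - r)).arctan.const_mul 2
    refine this.congr_deriv ?_
    field_simp
    ring
  have hcont : Continuous fun u : ℝ => 4 * (1 - r) / ((1 - r) ^ 2 + 4 * u ^ 2) :=
    continuous_const.div (by fun_prop) fun u => by positivity
  calc ∫ u in (0 : ℝ)..1 / 2, kernel r u
      ≤ ∫ u in (0 : ℝ)..1 / 2, 4 * (1 - r) / ((1 - r) ^ 2 + 4 * u ^ 2) :=
        integral_mono_on (by norm_num) ((continuous_kernel hr0 hr1).intervalIntegrable _ _)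
          (hcont.intervalIntegrable _ _) fun u hu => kernel_le hr0 hr1 hu
    _ = 2 * arctan (1 / (1 - r)) := by
        rw [integral_eq_sub_of_hasDerivAt (fun u _ => harctan u) (hcont.intervalIntegrable _ _)]
        norm_num
    _ ≤ π := by linarith [arctan_lt_pi_div_two (1 / (1 - r))]

lemma integral_neg_kernelDeriv_mul_max_le (hr0 : 0 ≤ r) (hr1 : r < 1) :
    ∫ u in (0 : ℝ)..1 / 2, -kernelDeriv r u * max (1 - r) (2 * u) ≤ 10 := by
  set δ := 1 - r
  have hK := continuous_kernel hr0 hr1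
  have hK' := continuous_kernelDeriv hr0 hr1
  have hparts : ∀ u, HasDerivAt (fun u => -((δ + 2 * u) * kernel r u))
      (-kernelDeriv r u * (δ + 2 * u) - 2 * kernel r u) u := fun u =>
    ((((hasDerivAt_id' u).const_mul 2).const_add δ).mul
      (hasDerivAt_kernel hr0 hr1 u)).neg.congr_deriv (by ring)
  have hF' : Continuous fun u => -kernelDeriv r u * (δ + 2 * u) - 2 * kernel r u := by fun_prop
  calc ∫ u in (0 : ℝ)..1 / 2, -kernelDeriv r u * max δ (2 * u)
      ≤ ∫ u in (0 : ℝ)..1 / 2, -kernelDeriv r u * (δ + 2 * u) := by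
        refine integral_mono_on (by norm_num) (Continuous.intervalIntegrable (by fun_prop) _ _)
          (Continuous.intervalIntegrable (by fun_prop) _ _) fun u hu => ?_
        exact mul_le_mul_of_nonneg_left (max_le (by linarith [hu.1]) (by linarith))
          (neg_nonneg.2 (kernelDeriv_nonpos hr0 hr1 hu))
    _ = ∫ u in (0 : ℝ)..1 / 2, ((-kernelDeriv r u * (δ + 2 * u) - 2 * kernel r u)
          + 2 * kernel r u) := by simp
    _ = δ * kernel r 0 - (δ + 1) * kernel r (1 / 2) + 2 * ∫ u in (0 : ℝ)..1 / 2, kernel r u := by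
        rw [integral_add (hF'.intervalIntegrable _ _) ((hK.const_mul 2).intervalIntegrable _ _),
          integral_eq_sub_of_hasDerivAt (fun u _ => hparts u) (hF'.intervalIntegrable _ _),
          intervalIntegral.integral_const_mul]
        ring
    _ ≤ 10 := by
        have := sub_mul_kernel_zero hr1
        have := mul_nonneg (by linarith : 0 ≤ δ + 1) (kernel_nonneg hr0 hr1 (1 / 2))
        linarith [integral_kernel_le hr0 hr1, pi_lt_four]

end Poisson

open Real in
lemma norm_exp_sub_sq (z : ℂ) (t : ℝ) :
    ‖Complex.exp (2 * π * Complex.I * t) - z‖ ^ 2 =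
      Poisson.denom ‖z‖ (t - Complex.arg z / (2 * π)) := by
  have hre := Complex.norm_mul_cos_arg z
  have him := Complex.norm_mul_sin_arg z
  have harg : 2 * π * (t - Complex.arg z / (2 * π)) = 2 * π * t - Complex.arg z := by
    field_simp
  rw [Poisson.denom, harg, cos_sub, Complex.sq_norm, Complex.normSq_apply]
  have hexp : Complex.exp (2 * π * Complex.I * t) = Complex.exp ((2 * π * t : ℝ) * Complex.I) := by
    push_cast; ring_nf
  rw [hexp, Complex.exp_mul_I]
  simp only [Complex.sub_re, Complex.sub_im, Complex.add_re, Complex.add_im, Complex.mul_re,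
    Complex.mul_im, Complex.I_re, Complex.I_im, ← Complex.ofReal_cos, ← Complex.ofReal_sin,
    Complex.ofReal_re, Complex.ofReal_im]
  rw [← hre, ← him]
  linear_combination sin_sq_add_cos_sq (2 * π * t) + ‖z‖ ^ 2 * sin_sq_add_cos_sq (Complex.arg z)

open Real in
lemma deriv_poisson_eq {z : ℂ} (hz : ‖z‖ < 1) (t : ℝ) :
    deriv (fun s : ℝ => (1 - ‖z‖ ^ 2) / ‖Complex.exp (2 * π * Complex.I * s) - z‖ ^ 2) t =
      Poisson.kernelDeriv ‖z‖ (t - Complex.arg z / (2 * π)) := by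
  have hfun : (fun s : ℝ => (1 - ‖z‖ ^ 2) / ‖Complex.exp (2 * π * Complex.I * s) - z‖ ^ 2) =
      fun s => Poisson.kernel ‖z‖ (s - Complex.arg z / (2 * π)) := by
    simp only [norm_exp_sub_sq]
    rfl
  rw [hfun]
  exact ((Poisson.hasDerivAt_kernel (norm_nonneg z) hz _).comp_sub_const t _).deriv

/-- The Poisson integral of a `Λ`-bounded premeasure, defined by integration by
parts against the distribution function `t ↦ μ(stdArc 0 t)`, satisfies
`P[μ](z) ≤ 10 ‖μ‖⁺_Λ Λ(1−|z|)` on the unit disk. -/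
theorem stmt7 (Λ : ℝ → ℝ) (hΛ : Majorant Λ) (μ : Premeasure) (C : ℝ)
    (hC : 0 ≤ C) (hμ : LambdaBounded Λ μ C)
    (z : ℂ) (hz : ‖z‖ < 1) :
    -(∫ t in Set.Ioc (0:ℝ) 1,
        deriv (fun s : ℝ => (1 - ‖z‖ ^ 2) /
          ‖Complex.exp (2 * Real.pi * Complex.I * s) - z‖ ^ 2) t *
          μ.m (stdArc 0 t))
      ≤ 10 * C * Λ (1 - ‖z‖) := by
  have hr0 := norm_nonneg z
  have hδ0 : 0 < 1 - ‖z‖ := sub_pos.2 hz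
  have hK' := Poisson.continuous_kernelDeriv hr0 hz
  rw [setIntegral_congr_fun
      (g := fun t => Poisson.kernelDeriv ‖z‖ (t - Complex.arg z / (2 * Real.pi)) * μ.distrib t)
      measurableSet_Ioc fun t ht => by simp only [deriv_poisson_eq hz, μ.distrib_of_mem_Ioc ht],
    ← intervalIntegral.integral_of_le zero_le_one,
    integral_comp_sub_mul_eq_integral_half hK' (Poisson.kernelDeriv_periodic _)
      (Poisson.kernelDeriv_neg _) μ.distrib_periodic (hμ.intervalIntegrable_distrib hΛ hC)]
  calc _ ≤ C * Λ (1 - ‖z‖) * ∫ u in (0 : ℝ)..1 / 2,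
          -Poisson.kernelDeriv ‖z‖ u * max (1 - ‖z‖) (2 * u) :=
        hμ.neg_integral_mul_distrib_sub_le hΛ hC hK'
          (fun u hu => Poisson.kernelDeriv_nonpos hr0 hz hu) _ hδ0 (by linarith)
    _ ≤ C * Λ (1 - ‖z‖) * 10 :=
        mul_le_mul_of_nonneg_left (Poisson.integral_neg_kernelDeriv_mul_max_le hr0 hz)
          (mul_nonneg hC (hΛ.pos hδ0 (by linarith)).le)
    _ = 10 * C * Λ (1 - ‖z‖) := by ring
end
end

section
/- Let h be a real-valued harmonic function on 𝔻 with h(0) = 0 and h(z) ≤ C·Λ(1−|z|) for all z ∈ 𝔻, with Fourier expansion h(re^{iθ}) = Σ_{n∈ℤ} aₙ r^{|n|} e^{inθ}. Then there is a constant C₁ such that |aₙ| ≤ C₁ Λ(1/|n|) for all n with |n| ≥ 2. -/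
/-!
For fixed `r < 1`, `aₙ r^{|n|}` is the `n`-th Fourier coefficient of `h_r(θ) = h(re^{iθ})`, so
`2π |aₙ| r^{|n|} ≤ ∫ |h_r|`. Since `h_r` has mean `a₀ = 0`, `∫ |h_r| = 2 ∫ h_r⁺ ≤ 4π C Λ(1 - r)`.
Taking `r = 1 - 1/|n|` and using `(1 - 1/m)^m ≥ e⁻²` gives `|aₙ| ≤ 2e² C Λ(1/|n|)`.
-/

open Set MeasureTheory Complex
open scoped Real

theorem integral_exp_I_mul_int_mul (n : ℤ) :
    ∫ θ in (0)..2 * π, exp (I * n * θ) = if n = 0 then (2 * π : ℂ) else 0 := by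
  split_ifs with hn
  · simp [hn]
  · have hc : I * n ≠ 0 := mul_ne_zero I_ne_zero (by exact_mod_cast hn)
    have hperiod : exp (I * n * (2 * π : ℝ)) = 1 := by
      rw [← exp_int_mul_two_pi_mul_I n]; push_cast; ring_nf
    rw [integral_exp_mul_complex hc, hperiod]
    simp

theorem norm_exp_I_mul_int_mul (n : ℤ) (θ : ℝ) : ‖exp (I * n * θ)‖ = 1 := by
  rw [mul_assoc]
  exact_mod_cast norm_exp_I_mul_ofReal (n * θ)

noncomputable def circleSeries (c : ℤ → ℂ) (θ : ℝ) : ℂ :=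
  ∑' n : ℤ, c n * exp (I * n * θ)

section circleSeries

variable {c : ℤ → ℂ}

theorem continuous_circleSeries (hc : Summable fun n => ‖c n‖) : Continuous (circleSeries c) :=
  continuous_tsum (fun n => by fun_prop) hc fun n θ => by
    rw [norm_mul, norm_exp_I_mul_int_mul, mul_one]

theorem integral_circleSeries_mul_exp_neg (hc : Summable fun n => ‖c n‖) (k : ℤ) :
    ∫ θ in (0)..2 * π, circleSeries c θ * exp (-(I * k * θ)) = 2 * π * c k := by
  have hterm : ∀ n : ℤ, ∀ θ : ℝ,
      c n * exp (I * n * θ) * exp (-(I * k * θ)) = c n * exp (I * (n - k : ℤ) * θ) := by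
    intro n θ
    rw [mul_assoc, ← exp_add]
    push_cast
    ring_nf
  have hsum : HasSum (fun n => ∫ θ in (0)..2 * π, c n * exp (I * n * θ) * exp (-(I * k * θ)))
      (∫ θ in (0)..2 * π, circleSeries c θ * exp (-(I * k * θ))) := by
    refine intervalIntegral.hasSum_integral_of_dominated_convergence (fun n _ => ‖c n‖)
      (fun n => by fun_prop) (fun n => ae_of_all _ fun θ _ => ?_) (ae_of_all _ fun _ _ => hc)
      intervalIntegrable_const (ae_of_all _ fun θ _ => ?_)
    · rw [hterm, norm_mul, norm_exp_I_mul_int_mul, mul_one]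
    · have hsummable : Summable fun n : ℤ => c n * exp (I * n * θ) :=
        hc.of_norm_bounded fun n => (norm_mul_le _ _).trans (by rw [norm_exp_I_mul_int_mul, mul_one])
      exact hsummable.hasSum.mul_right _
  have hcoeff : ∀ n : ℤ, ∫ θ in (0)..2 * π, c n * exp (I * n * θ) * exp (-(I * k * θ))
      = if n = k then 2 * π * c k else 0 := by
    intro n
    simp_rw [hterm, intervalIntegral.integral_const_mul, integral_exp_I_mul_int_mul, sub_eq_zero]
    split_ifs with h
    · rw [h, mul_comm]
    · exact mul_zero _
  simp_rw [hcoeff] at hsum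
  exact hsum.unique (hasSum_ite_eq k _)

theorem two_pi_mul_norm_le_integral_norm_circleSeries (hc : Summable fun n => ‖c n‖) (k : ℤ) :
    2 * π * ‖c k‖ ≤ ∫ θ in (0)..2 * π, ‖circleSeries c θ‖ := by
  calc 2 * π * ‖c k‖ = ‖∫ θ in (0)..2 * π, circleSeries c θ * exp (-(I * k * θ))‖ := by
        rw [integral_circleSeries_mul_exp_neg hc, norm_mul]
        norm_num [abs_of_pos Real.pi_pos]
    _ ≤ ∫ θ in (0)..2 * π, ‖circleSeries c θ * exp (-(I * k * θ))‖ :=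
        intervalIntegral.norm_integral_le_integral_norm Real.two_pi_pos.le
    _ = ∫ θ in (0)..2 * π, ‖circleSeries c θ‖ := by
        have hk : ∀ θ : ℝ, ‖exp (-(I * k * θ))‖ = 1 := fun θ => by
          simpa using norm_exp_I_mul_int_mul (-k) θ
        simp_rw [norm_mul, hk, mul_one]

end circleSeries

theorem integral_abs_le_of_integral_eq_zero {α : Type*} [MeasurableSpace α] {μ : Measure α}
    [IsFiniteMeasure μ] {u : α → ℝ} {M : ℝ} (hu : Integrable u μ) (hu0 : ∫ x, u x ∂μ = 0)
    (huM : ∀ᵐ x ∂μ, u x ≤ M) : ∫ x, |u x| ∂μ ≤ 2 * μ.real univ * M := by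
  have hmass : 0 ≤ μ.real univ * M := by
    simpa [hu0] using integral_mono_ae hu (integrable_const M) huM
  -- `M` itself may be negative when `μ = 0`; only `μ(univ) M ≥ 0` is known.
  have hpoint : ∀ᵐ x ∂μ, |u x| ≤ 2 * max M 0 - u x := by
    filter_upwards [huM] with x hx
    rcases le_total 0 (u x) with h | h
    · rw [abs_of_nonneg h]; linarith [le_max_left M 0]
    · rw [abs_of_nonpos h]; linarith [le_max_right M 0]
  calc ∫ x, |u x| ∂μ ≤ ∫ x, (2 * max M 0 - u x) ∂μ :=
        integral_mono_ae hu.abs ((integrable_const _).sub hu) hpoint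
    _ = 2 * (μ.real univ * max M 0) := by
        rw [integral_sub (integrable_const _) hu, hu0, integral_const, smul_eq_mul, sub_zero]
        ring
    _ = 2 * μ.real univ * M := by
        rw [mul_max_of_nonneg _ _ measureReal_nonneg, mul_zero, max_eq_left hmass, mul_assoc]

theorem norm_coeff_le_of_circleSeries_re_le {c : ℤ → ℂ} {M : ℝ} (hc : Summable fun n => ‖c n‖)
    (hc0 : c 0 = 0) (him : ∀ θ, (circleSeries c θ).im = 0) (hre : ∀ θ, (circleSeries c θ).re ≤ M)
    (k : ℤ) : ‖c k‖ ≤ 2 * M := by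
  set u : ℝ → ℝ := fun θ => (circleSeries c θ).re
  have hu : Continuous u := continuous_re.comp (continuous_circleSeries hc)
  have hcoe : ∀ θ, circleSeries c θ = u θ := fun θ => ext rfl (him θ)
  have hu0 : ∫ θ in (0)..2 * π, u θ = 0 := by
    have := integral_circleSeries_mul_exp_neg hc 0
    simp only [hcoe, Int.cast_zero, mul_zero, zero_mul, neg_zero, exp_zero, mul_one, hc0] at this
    rw [intervalIntegral.integral_ofReal] at this
    exact_mod_cast this
  have habs : ∫ θ in (0)..2 * π, |u θ| ≤ 2 * (2 * π) * M := by
    rw [intervalIntegral.integral_of_le Real.two_pi_pos.le] at hu0 ⊢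
    simpa [Real.two_pi_pos.le] using integral_abs_le_of_integral_eq_zero
      (μ := volume.restrict (Ioc 0 (2 * π))) hu.integrableOn_Ioc hu0 (ae_of_all _ hre)
  have hnorm : ∫ θ in (0)..2 * π, ‖circleSeries c θ‖ = ∫ θ in (0)..2 * π, |u θ| := by
    simp_rw [hcoe, norm_real, Real.norm_eq_abs]
  have := two_pi_mul_norm_le_integral_norm_circleSeries hc k
  nlinarith [Real.two_pi_pos]

theorem Real.exp_neg_two_mul_le_one_sub {t : ℝ} (ht0 : 0 ≤ t) (ht : t ≤ 1 / 2) :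
    Real.exp (-(2 * t)) ≤ 1 - t := by
  rw [Real.exp_neg, inv_le_iff_one_le_mul₀' (Real.exp_pos _)]
  nlinarith [mul_le_mul_of_nonneg_right (Real.add_one_le_exp (2 * t)) (by linarith : 0 ≤ 1 - t)]

theorem Real.exp_neg_two_le_one_sub_inv_pow {m : ℕ} (hm : 2 ≤ m) :
    Real.exp (-2) ≤ (1 - 1 / m) ^ m := by
  have hm' : (2 : ℝ) ≤ m := by exact_mod_cast hm
  calc Real.exp (-2) = Real.exp (-(2 * (1 / m))) ^ m := by
        rw [← Real.exp_nat_mul]; congr 1; field_simp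
    _ ≤ (1 - 1 / m) ^ m := by
        gcongr
        exact Real.exp_neg_two_mul_le_one_sub (by positivity) (by
          rw [div_le_div_iff₀ (by linarith) two_pos]; linarith)

theorem stmt8_general (Λ : ℝ → ℝ)
    (a : ℤ → ℂ) (C : ℝ) (ha0 : a 0 = 0)
    (hsum : ∀ r ∈ Set.Ico (0:ℝ) 1,
      Summable fun n : ℤ => ‖a n‖ * r ^ n.natAbs)
    (hreal : ∀ r ∈ Set.Ico (0:ℝ) 1, ∀ θ : ℝ,
      (∑' n : ℤ, a n * (r : ℂ) ^ n.natAbs * Complex.exp (Complex.I * n * θ)).im = 0)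
    (hbound : ∀ r ∈ Set.Ico (0:ℝ) 1, ∀ θ : ℝ,
      (∑' n : ℤ, a n * (r : ℂ) ^ n.natAbs * Complex.exp (Complex.I * n * θ)).re
        ≤ C * Λ (1 - r)) :
    ∃ C₁ : ℝ, ∀ n : ℤ, 2 ≤ n.natAbs →
      ‖a n‖ ≤ C₁ * Λ (1 / (n.natAbs : ℝ)) := by
  refine ⟨2 * Real.exp 2 * C, fun n hn => ?_⟩
  set m := n.natAbs
  set r : ℝ := 1 - 1 / m
  have hm : (2 : ℝ) ≤ m := by exact_mod_cast hn
  have hr : r ∈ Ico (0 : ℝ) 1 :=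
    ⟨by rw [sub_nonneg, div_le_one₀ (by linarith)]; linarith, sub_lt_self _ (by positivity)⟩
  have hnorm : ∀ j : ℤ, ‖a j * (r : ℂ) ^ j.natAbs‖ = ‖a j‖ * r ^ j.natAbs := fun j => by
    rw [norm_mul, norm_pow, norm_real, Real.norm_of_nonneg hr.1]
  have hcoeff : ‖a n‖ * r ^ m ≤ 2 * (C * Λ (1 / m)) := by
    rw [← hnorm, show 1 / (m : ℝ) = 1 - r by simp only [r]; ring]
    exact norm_coeff_le_of_circleSeries_re_le (by simpa only [hnorm] using hsum r hr)
      (by simp [ha0]) (hreal r hr) (hbound r hr) n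
  calc ‖a n‖ = Real.exp 2 * (‖a n‖ * Real.exp (-2)) := by
        rw [mul_left_comm, ← Real.exp_add]; norm_num
    _ ≤ Real.exp 2 * (‖a n‖ * r ^ m) := by
        gcongr; exact Real.exp_neg_two_le_one_sub_inv_pow hn
    _ ≤ 2 * Real.exp 2 * C * Λ (1 / m) := by nlinarith [Real.exp_pos 2]

/-- If a real-valued harmonic function `h(re^{iθ}) = Σ_{n∈ℤ} aₙ r^{|n|} e^{inθ}`
on the disk satisfies `h(0) = 0` and `h ≤ C Λ(1−r)`, then
`|aₙ| ≤ C₁ Λ(1/|n|)` for `|n| ≥ 2`. -/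
theorem stmt8 (Λ : ℝ → ℝ)
    (hpos : ∀ t ∈ Set.Ioc (0:ℝ) 1, 0 < Λ t)
    (hanti : AntitoneOn Λ (Set.Ioc 0 1))
    (a : ℤ → ℂ) (C : ℝ) (ha0 : a 0 = 0)
    (hsum : ∀ r ∈ Set.Ico (0:ℝ) 1,
      Summable fun n : ℤ => ‖a n‖ * r ^ n.natAbs)
    (hreal : ∀ r ∈ Set.Ico (0:ℝ) 1, ∀ θ : ℝ,
      (∑' n : ℤ, a n * (r : ℂ) ^ n.natAbs * Complex.exp (Complex.I * n * θ)).im = 0)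
    (hbound : ∀ r ∈ Set.Ico (0:ℝ) 1, ∀ θ : ℝ,
      (∑' n : ℤ, a n * (r : ℂ) ^ n.natAbs * Complex.exp (Complex.I * n * θ)).re
        ≤ C * Λ (1 - r)) :
    ∃ C₁ : ℝ, ∀ n : ℤ, 2 ≤ n.natAbs →
      ‖a n‖ ≤ C₁ * Λ (1 / (n.natAbs : ℝ)) :=
  stmt8_general Λ a C ha0 hsum hreal hbound
end

section
/- Let μ be a positive measure on [0,1] supported on a set E built from a nested family {𝓘ₙ} as above, such that whenever A_{j+1} ≤ |I| < A_j (with A_j = 2^{−j−M_j}) and I meets one of the generation-j intervals I_j, one has μ(I) ≤ 4(|I|/A_j)μ(I_j) = 4|I|2^j. If 2^j ≤ C(log(1/A_j))^α for all j, then ω_μ(t) ≤ C' t (log(1/t))^α for small t. -/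
open MeasureTheory Filter Set
open scoped Topology ENNReal

/-- If a measure `μ` on `ℝ` satisfies `μ(I) ≤ 4|I|2^j` whenever
`A_{j+1} ≤ |I| < A_j` for a decreasing null sequence of scales `A_j`, and
`2^j ≤ C (log(1/A_j))^α`, then `ω_μ(t) ≤ C' t (log(1/t))^α` for small `t`. -/
theorem stmt17 (α : ℝ) (hα : α ∈ Set.Ioo (0:ℝ) 1)
    (A : ℕ → ℝ) (hApos : ∀ j, 0 < A j) (hAanti : StrictAnti A)
    (hA0 : A 0 < 1) (hAlim : Tendsto A atTop (𝓝 0))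
    (μ : Measure ℝ)
    (hloc : ∀ j : ℕ, ∀ a b : ℝ, A (j + 1) ≤ b - a → b - a < A j →
      μ (Set.Icc a b) ≤ ENNReal.ofReal (4 * (b - a) * 2 ^ j))
    (C : ℝ) (hC : ∀ j : ℕ, (2:ℝ) ^ j ≤ C * Real.log (1 / A j) ^ α) :
    ∃ C' > (0:ℝ), ∃ t₀ > (0:ℝ), ∀ a b : ℝ, 0 < b - a → b - a ≤ t₀ →
      μ (Set.Icc a b) ≤ ENNReal.ofReal (C' * (b - a) * Real.log (1 / (b - a)) ^ α) := by
  have hL0 : (0:ℝ) ≤ Real.log (1 / A 0) :=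
    Real.log_nonneg (one_le_one_div (hApos 0) hA0.le)
  have hCpos : 0 < C := by
    by_contra h
    push_neg at h
    have h0 := hC 0
    have hL : (0:ℝ) ≤ Real.log (1 / A 0) ^ α := Real.rpow_nonneg hL0 α
    nlinarith [mul_nonneg (neg_nonneg.mpr h) hL]
  refine ⟨4 * C, by positivity, A 1, hApos 1, ?_⟩
  intro a b hpos hle
  set t := b - a with ht
  have hex : ∃ n, A n ≤ t := by
    obtain ⟨n, hn⟩ := (hAlim.eventually_lt_const hpos).exists
    exact ⟨n, hn.le⟩
  set n := Nat.find hex with hndef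
  have hn : A n ≤ t := Nat.find_spec hex
  have hn1 : 1 ≤ n := by
    by_contra h
    push_neg at h
    interval_cases n
    · have h10 : A 1 < A 0 := hAanti Nat.zero_lt_one
      linarith
  set j := n - 1 with hjdef
  have hjn : j + 1 = n := Nat.succ_pred_eq_of_pos hn1
  have hjt : t < A j := lt_of_not_ge (Nat.find_min hex (by omega))
  have key := hloc j a b (by rw [hjn]; exact hn) hjt
  refine key.trans (ENNReal.ofReal_le_ofReal ?_)
  have hAj1 : A j < 1 := lt_of_le_of_lt (hAanti.antitone (Nat.zero_le j)) (lt_of_le_of_lt le_rfl hA0) |>.trans_le le_rfl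
  have hlog1 : (0:ℝ) ≤ Real.log (1 / A j) :=
    Real.log_nonneg (one_le_one_div (hApos j) hAj1.le)
  have hlog2 : Real.log (1 / A j) ≤ Real.log (1 / t) :=
    Real.log_le_log (one_div_pos.mpr (hApos j)) (one_div_le_one_div_of_le hpos hjt.le)
  have hrpow : Real.log (1 / A j) ^ α ≤ Real.log (1 / t) ^ α :=
    Real.rpow_le_rpow hlog1 hlog2 hα.1.le
  have h1 : (4:ℝ) * t * 2 ^ j ≤ 4 * t * (C * Real.log (1 / A j) ^ α) :=
    mul_le_mul_of_nonneg_left (hC j) (by positivity)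
  have h2 : (4:ℝ) * t * (C * Real.log (1 / A j) ^ α) ≤ 4 * C * t * Real.log (1 / t) ^ α := by
    nlinarith [mul_le_mul_of_nonneg_left hrpow (by positivity : (0:ℝ) ≤ 4 * C * t)]
  linarith
end
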